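/- arXiv:2507.18875 — 2 statements merged into one kernel-verified Lean document; each statement's English description precedes it below -/
import Mathlib

section
/- Let β : ℕ → ℝ be a variance schedule and suppose there exists c > 0 such that c ≤ β_n < 1 for all n ≥ 1. Set α_n = 1 − β_n and ᾱ_n = ∏_{i=1}^{n} α_i. Then ᾱ_n → 0 as n → ∞, and for every fixed x₀ ∈ ℝ the Gaussian measures N(√(ᾱ_n)·x₀, 1 − ᾱ_n) converge weakly (in distribution) to the standard Gaussian measure N(0,1) as n → ∞. In other words, the marginal distribution of the DDPM forward chain started from x₀ approaches the standard Gaussian distribution as the number of noising steps tends to infinity. -/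
/-!
Since `c ≤ β_i < 1`, the product `ᾱ_n` is squeezed between `0` and `(1 - c)^n`. The Gaussian
`N(m, v)` has characteristic function `t ↦ exp(itm - vt²/2)`, which is jointly continuous in
`(m, v)`; by Lévy's continuity theorem `(m, v) ↦ N(m, v)` is therefore weakly continuous, and
`(√ᾱ_n · x₀, 1 - ᾱ_n) → (0, 1)`.
-/

open MeasureTheory ProbabilityTheory Filter Topology
open scoped NNReal

theorem continuous_gaussianReal :
    Continuous (Y := ProbabilityMeasure ℝ) fun p : ℝ × ℝ≥0 =>
      ⟨gaussianReal p.1 p.2, inferInstance⟩ := by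
  refine continuous_iff_seqContinuous.2 fun p q hp => ?_
  refine ProbabilityMeasure.tendsto_of_tendsto_charFun fun t => ?_
  change Tendsto (fun n => charFun (gaussianReal (p n).1 (p n).2) t) atTop
    (𝓝 (charFun (gaussianReal q.1 q.2) t))
  simp only [charFun_gaussianReal]
  have hchar : Continuous fun p : ℝ × ℝ≥0 =>
      Complex.exp (t * p.1 * Complex.I - (p.2 : ℝ) * t ^ 2 / 2) := by fun_prop
  exact (hchar.tendsto q).comp hp

theorem tendsto_prod_Icc_zero_of_le {f : ℕ → ℝ} {r : ℝ} (hr : r < 1)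
    (hf : ∀ n, 1 ≤ n → 0 ≤ f n ∧ f n ≤ r) :
    Tendsto (fun n => ∏ i ∈ Finset.Icc 1 n, f i) atTop (𝓝 0) := by
  have hr₀ : 0 ≤ r := (hf 1 le_rfl).1.trans (hf 1 le_rfl).2
  refine squeeze_zero (fun n => Finset.prod_nonneg fun i hi => (hf i (Finset.mem_Icc.1 hi).1).1)
    (fun n => ?_) (tendsto_pow_atTop_nhds_zero_of_lt_one hr₀ hr)
  calc ∏ i ∈ Finset.Icc 1 n, f i ≤ ∏ _i ∈ Finset.Icc 1 n, r :=
        Finset.prod_le_prod (fun i hi => (hf i (Finset.mem_Icc.1 hi).1).1)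
          fun i hi => (hf i (Finset.mem_Icc.1 hi).1).2
    _ = r ^ n := by simp

/-- If the variance schedule satisfies `c ≤ β_n < 1` for some `c > 0`, then
`ᾱ_n = ∏_{i=1}^n (1 - β_i) → 0`, and the forward DDPM marginals
`N(√ᾱ_n · x₀, 1 - ᾱ_n)` converge weakly to the standard Gaussian `N(0,1)`. -/
theorem ddpm_marginal_tendsto_stdGaussian
    (β : ℕ → ℝ) (c : ℝ) (hc : 0 < c)
    (hβ : ∀ n : ℕ, 1 ≤ n → c ≤ β n ∧ β n < 1)
    (x₀ : ℝ) :
    Tendsto (fun n : ℕ => ∏ i ∈ Finset.Icc 1 n, (1 - β i)) atTop (nhds (0 : ℝ)) ∧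
    Tendsto
      (fun n : ℕ =>
        (⟨gaussianReal (Real.sqrt (∏ i ∈ Finset.Icc 1 n, (1 - β i)) * x₀)
            (Real.toNNReal (1 - ∏ i ∈ Finset.Icc 1 n, (1 - β i))),
          inferInstance⟩ : ProbabilityMeasure ℝ))
      atTop
      (@nhds (ProbabilityMeasure ℝ) _ (⟨gaussianReal 0 1, inferInstance⟩ : ProbabilityMeasure ℝ)) := by
  have hᾱ : Tendsto (fun n => ∏ i ∈ Finset.Icc 1 n, (1 - β i)) atTop (𝓝 0) :=
    tendsto_prod_Icc_zero_of_le (r := 1 - c) (by linarith) fun n hn =>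
      ⟨by linarith [(hβ n hn).2], by linarith [(hβ n hn).1]⟩
  have hmean : Tendsto (fun n => √(∏ i ∈ Finset.Icc 1 n, (1 - β i)) * x₀) atTop (𝓝 0) := by
    simpa only [Real.sqrt_zero, zero_mul] using hᾱ.sqrt.mul_const x₀
  have hvar : Tendsto (fun n => (1 - ∏ i ∈ Finset.Icc 1 n, (1 - β i)).toNNReal) atTop (𝓝 1) := by
    have := (continuous_real_toNNReal.tendsto _).comp (hᾱ.const_sub 1)
    rwa [sub_zero, Real.toNNReal_one] at this
  exact ⟨hᾱ, (continuous_gaussianReal.tendsto (0, 1)).comp (hmean.prodMk_nhds hvar)⟩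
end

section
/- Let t ≥ 1, let ᾱ_{t−1}, α_t ∈ (0,1), set β_t = 1 − α_t and ᾱ_t = α_t·ᾱ_{t−1}, and fix x₀ ∈ ℝ. Let ε and Z be independent standard Gaussian random variables, and define X_{t−1} = √(ᾱ_{t−1})·x₀ + √(1−ᾱ_{t−1})·ε and X_t = √(α_t)·X_{t−1} + √(β_t)·Z. Then the pair (X_{t−1}, X_t) is jointly Gaussian, and the conditional distribution of X_{t−1} given X_t = x is the Gaussian distribution with mean μ̃_t(x, x₀) = (√(α_t)(1−ᾱ_{t−1})·x + √(ᾱ_{t−1})·β_t·x₀) / (1 − ᾱ_t) and variance β̃_t = (1 − ᾱ_{t−1})·β_t / (1 − ᾱ_t). -/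
/-!
Write `X_t = √α_t X_{t-1} + N` with `N = √β_t Z`, where `X_{t-1} ~ N(√ᾱ_{t-1} x₀, 1 - ᾱ_{t-1})`
and `N ~ N(0, β_t)` are independent; every linear combination of them is then Gaussian. For the
regression coefficient `a = √α_t (1 - ᾱ_{t-1}) / (α_t (1 - ᾱ_{t-1}) + β_t)` the residual
`X_{t-1} - a X_t` is uncorrelated with `X_t`, hence independent of it because the pair is jointly
Gaussian. Conditionally on `X_t = x`, `X_{t-1}` is therefore `a x` plus an independent Gaussian, and
`α_t (1 - ᾱ_{t-1}) + β_t = 1 - ᾱ_t` turns its parameters into `μ̃_t` and `β̃_t`.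
-/

open MeasureTheory ProbabilityTheory
open scoped NNReal

namespace ProbabilityTheory

noncomputable def affineGaussianKernel (a b : ℝ) (v : ℝ≥0) : Kernel ℝ ℝ where
  toFun x := gaussianReal (a * x + b) v
  measurable' := measurable_gaussianReal.comp (f := fun x => (a * x + b, v)) (by fun_prop)

instance (a b : ℝ) (v : ℝ≥0) : IsMarkovKernel (affineGaussianKernel a b v) :=
  ⟨fun x => inferInstanceAs (IsProbabilityMeasure (gaussianReal (a * x + b) v))⟩

lemma affineGaussianKernel_apply (a b : ℝ) (v : ℝ≥0) (x : ℝ) :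
    affineGaussianKernel a b v x = gaussianReal (a * x + b) v := rfl

lemma _root_.MeasureTheory.Measure.map_prod_eq_compProd {α β γ : Type*} [MeasurableSpace α]
    [MeasurableSpace β] [MeasurableSpace γ] (μ : Measure α) (ν : Measure β) [SFinite μ]
    [SFinite ν] {κ : Kernel α γ} [IsSFiniteKernel κ] {g : α × β → γ} (hg : Measurable g)
    (hκ : ∀ x, κ x = ν.map fun y => g (x, y)) :
    (μ.prod ν).map (fun p => (p.1, g p)) = μ ⊗ₘ κ := by
  have hF : Measurable fun p : α × β => (p.1, g p) := measurable_fst.prodMk hg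
  ext s hs
  rw [Measure.map_apply hF hs, Measure.prod_apply (hF hs), Measure.compProd_apply hs]
  refine lintegral_congr fun x => ?_
  rw [hκ, Measure.map_apply (by fun_prop) (measurable_prodMk_left hs)]
  rfl

variable {Ω : Type*} [MeasurableSpace Ω] {P : Measure Ω}

lemma condDistrib_ae_eq_affineGaussianKernel [IsFiniteMeasure P] {X Y : Ω → ℝ}
    (hX : Measurable X) (hY : Measurable Y) {a b : ℝ} {v : ℝ≥0}
    (hind : IndepFun X (fun ω => Y ω - a * X ω) P)
    (hlaw : HasLaw (fun ω => Y ω - a * X ω) (gaussianReal b v) P) :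
    condDistrib Y X P =ᵐ[P.map X] affineGaussianKernel a b v := by
  have hW : Measurable fun ω => Y ω - a * X ω := by fun_prop
  refine condDistrib_ae_eq_of_measure_eq_compProd X hY.aemeasurable ?_
  calc P.map (fun ω => (X ω, Y ω))
      = (P.map fun ω => (X ω, Y ω - a * X ω)).map fun p => (p.1, a * p.1 + p.2) := by
        rw [Measure.map_map (by fun_prop) (hX.prodMk hW)]
        congr 1 with ω <;> simp
    _ = ((P.map X).prod (gaussianReal b v)).map fun p => (p.1, a * p.1 + p.2) := by
        rw [(indepFun_iff_map_prod_eq_prod_map_map hX.aemeasurable hW.aemeasurable).mp hind,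
          hlaw.map_eq]
    _ = P.map X ⊗ₘ affineGaussianKernel a b v :=
        Measure.map_prod_eq_compProd _ _ (by fun_prop) fun x => by
          rw [affineGaussianKernel_apply, add_comm, ← gaussianReal_map_const_add]

lemma gaussianReal_sqrt_mul {X : Ω → ℝ} (hX : HasLaw X (gaussianReal 0 1) P) {v : ℝ}
    (hv : 0 ≤ v) : HasLaw (fun ω => Real.sqrt v * X ω) (gaussianReal 0 v.toNNReal) P := by
  convert gaussianReal_const_mul hX (Real.sqrt v) using 2
  · ring
  · ext
    simp [Real.sq_sqrt hv, hv]

section LinearCombination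

variable {X Y : Ω → ℝ}

lemma IndepFun.hasLaw_const_mul_add_const_mul {μ₁ μ₂ : ℝ} {v₁ v₂ : ℝ≥0}
    (hXY : IndepFun X Y P) (hX : HasLaw X (gaussianReal μ₁ v₁) P)
    (hY : HasLaw Y (gaussianReal μ₂ v₂) P) (s t : ℝ) :
    HasLaw (fun ω => s * X ω + t * Y ω)
      (gaussianReal (s * μ₁ + t * μ₂)
        (.mk (s ^ 2) (sq_nonneg s) * v₁ + .mk (t ^ 2) (sq_nonneg t) * v₂)) P := by
  have h := (hXY.comp (measurable_const_mul s) (measurable_const_mul t)).hasLaw_fun_add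
    (gaussianReal_const_mul hX s) (gaussianReal_const_mul hY t)
  rwa [gaussianReal_conv_gaussianReal] at h

lemma HasGaussianLaw.const_mul_add_const_mul_prodMk
    (h : HasGaussianLaw (fun ω => (X ω, Y ω)) P) (s₁ t₁ s₂ t₂ : ℝ) :
    HasGaussianLaw (fun ω => (s₁ * X ω + t₁ * Y ω, s₂ * X ω + t₂ * Y ω)) P :=
  h.map_fun ((s₁ • ContinuousLinearMap.fst ℝ ℝ ℝ + t₁ • .snd ℝ ℝ ℝ).prod
    (s₂ • ContinuousLinearMap.fst ℝ ℝ ℝ + t₂ • .snd ℝ ℝ ℝ))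

lemma IndepFun.covariance_const_mul_add_const_mul [IsFiniteMeasure P] (hXY : IndepFun X Y P)
    (hX : MemLp X 2 P) (hY : MemLp Y 2 P) (s₁ t₁ s₂ t₂ : ℝ) :
    cov[fun ω => s₁ * X ω + t₁ * Y ω, fun ω => s₂ * X ω + t₂ * Y ω; P]
      = s₁ * s₂ * Var[X; P] + t₁ * t₂ * Var[Y; P] := by
  have hlin (s t : ℝ) : (fun ω => s * X ω + t * Y ω) = (fun ω => s * X ω) + fun ω => t * Y ω :=
    rfl
  rw [hlin, hlin,
    covariance_add_left (hX.const_mul _) (hY.const_mul _) ((hX.const_mul _).add (hY.const_mul _)),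
    covariance_add_right (hX.const_mul _) (hX.const_mul _) (hY.const_mul _),
    covariance_add_right (hY.const_mul _) (hX.const_mul _) (hY.const_mul _)]
  simp only [covariance_const_mul_left, covariance_const_mul_right,
    covariance_self hX.aemeasurable, covariance_self hY.aemeasurable,
    hXY.covariance_eq_zero hX hY, hXY.symm.covariance_eq_zero hY hX]
  ring

end LinearCombination

lemma condDistrib_const_mul_add_ae_eq_gaussianReal [IsProbabilityMeasure P] {X N : Ω → ℝ}
    {μ : ℝ} {v w : ℝ≥0} (hXm : Measurable X) (hNm : Measurable N)
    (hX : HasLaw X (gaussianReal μ v) P) (hN : HasLaw N (gaussianReal 0 w) P)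
    (hXN : IndepFun X N P) {s : ℝ} (hD : s ^ 2 * v + w ≠ 0) :
    ∀ᵐ y ∂P.map (fun ω => s * X ω + N ω),
      condDistrib X (fun ω => s * X ω + N ω) P y
        = gaussianReal ((s * v * y + w * μ) / (s ^ 2 * v + w))
            (v * w / (s ^ 2 * v + w) : ℝ).toNNReal := by
  set a := s * v / (s ^ 2 * v + w)
  have hW : (fun ω => X ω - a * (s * X ω + N ω)) = fun ω => (1 - a * s) * X ω + -a * N ω := by
    funext ω; ring
  have hindep : IndepFun (fun ω => s * X ω + N ω) (fun ω => X ω - a * (s * X ω + N ω)) P := by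
    have hG := (hXN.hasGaussianLaw hX.hasGaussianLaw
      hN.hasGaussianLaw).const_mul_add_const_mul_prodMk s 1 (1 - a * s) (-a)
    have hcov := hXN.covariance_const_mul_add_const_mul hX.hasGaussianLaw.memLp_two
      hN.hasGaussianLaw.memLp_two s 1 (1 - a * s) (-a)
    simp only [one_mul] at hG hcov
    rw [hW]
    refine hG.indepFun_of_covariance_eq_zero ?_
    rw [hcov, hX.variance_eq, hN.variance_eq, variance_id_gaussianReal, variance_id_gaussianReal]
    simp only [a]
    field_simp
    ring
  have hlaw := hXN.hasLaw_const_mul_add_const_mul hX hN (1 - a * s) (-a)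
  rw [← hW] at hlaw
  filter_upwards [condDistrib_ae_eq_affineGaussianKernel (by fun_prop) hXm hindep hlaw] with y hy
  rw [hy, affineGaussianKernel_apply]
  congr 1
  · simp only [a]
    field_simp
    ring
  · ext
    rw [Real.coe_toNNReal _ (by positivity)]
    simp only [NNReal.coe_add, NNReal.coe_mul, NNReal.coe_mk, a]
    field_simp
    ring

end ProbabilityTheory

theorem ddpm_posterior_gaussian_general
    {Ω : Type*} [MeasurableSpace Ω] (P : Measure Ω) [IsProbabilityMeasure P]
    (abarPrev alpha : ℝ)
    (habarPrev : abarPrev ∈ Set.Ioo (0 : ℝ) 1) (halpha : alpha ∈ Set.Ioo (0 : ℝ) 1)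
    (betat : ℝ) (hbetat : betat = 1 - alpha)
    (abar : ℝ) (habar : abar = alpha * abarPrev)
    (x₀ : ℝ)
    (ε Z : Ω → ℝ) (hεmeas : Measurable ε) (hZmeas : Measurable Z)
    (hindep : IndepFun ε Z P)
    (hεlaw : P.map ε = gaussianReal 0 1) (hZlaw : P.map Z = gaussianReal 0 1)
    (Xprev Xt : Ω → ℝ)
    (hXprev : Xprev = fun ω => Real.sqrt abarPrev * x₀ + Real.sqrt (1 - abarPrev) * ε ω)
    (hXt : Xt = fun ω => Real.sqrt alpha * Xprev ω + Real.sqrt betat * Z ω) :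
    (∀ a b : ℝ, ∃ (m : ℝ) (v : NNReal),
      P.map (fun ω => a * Xprev ω + b * Xt ω) = gaussianReal m v) ∧
    (∀ᵐ x ∂(P.map Xt),
      condDistrib Xprev Xt P x =
        gaussianReal
          ((Real.sqrt alpha * (1 - abarPrev) * x + Real.sqrt abarPrev * betat * x₀)
            / (1 - abar))
          (Real.toNNReal ((1 - abarPrev) * betat / (1 - abar)))) := by
  obtain ⟨hap0, hap1⟩ := habarPrev
  obtain ⟨hal0, hal1⟩ := halpha
  have hq : 0 ≤ 1 - abarPrev := by linarith
  have hb : 0 ≤ betat := by linarith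
  have hXprevlaw : HasLaw Xprev
      (gaussianReal (Real.sqrt abarPrev * x₀) (1 - abarPrev).toNNReal) P := by
    simpa [hXprev] using gaussianReal_const_add
      (gaussianReal_sqrt_mul ⟨hεmeas.aemeasurable, hεlaw⟩ hq) (Real.sqrt abarPrev * x₀)
  have hnoise := gaussianReal_sqrt_mul ⟨hZmeas.aemeasurable, hZlaw⟩ hb
  have hXprevm : Measurable Xprev := by rw [hXprev]; fun_prop
  have hXprev_noise : IndepFun Xprev (fun ω => Real.sqrt betat * Z ω) P := by
    rw [hXprev]
    exact hindep.comp (φ := fun e => Real.sqrt abarPrev * x₀ + Real.sqrt (1 - abarPrev) * e)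
      (by fun_prop) (measurable_const_mul _)
  refine ⟨fun a b => ?_, ?_⟩
  · have hcomb : (fun ω => a * Xprev ω + b * Xt ω)
        = fun ω => (a + b * Real.sqrt alpha) * Xprev ω + b * (Real.sqrt betat * Z ω) := by
      rw [hXt]; funext ω; ring
    exact ⟨_, _, hcomb ▸
      (hXprev_noise.hasLaw_const_mul_add_const_mul hXprevlaw hnoise _ _).map_eq⟩
  · have hD : 0 < 1 - abar := by rw [habar]; nlinarith
    have hden : Real.sqrt alpha ^ 2 * (1 - abarPrev) + betat = 1 - abar := by
      rw [Real.sq_sqrt hal0.le, hbetat, habar]; ring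
    rw [hXt]
    filter_upwards [condDistrib_const_mul_add_ae_eq_gaussianReal hXprevm (by fun_prop)
      hXprevlaw hnoise hXprev_noise (by simp [hq, hb, hden, hD.ne'])] with x hx
    simp only [hx, Real.coe_toNNReal _ hq, Real.coe_toNNReal _ hb, hden]
    congr 2
    ring

/-- In the DDPM forward process, with `X_{t-1} = √ᾱ_{t-1} x₀ + √(1-ᾱ_{t-1}) ε` and
`X_t = √α_t X_{t-1} + √β_t Z` (where `β_t = 1 - α_t`, `ᾱ_t = α_t ᾱ_{t-1}`, and `ε, Z`
independent standard Gaussians), the pair `(X_{t-1}, X_t)` is jointly Gaussian (every linear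
combination has a Gaussian law), and the conditional distribution of `X_{t-1}` given
`X_t = x` is Gaussian with mean
`μ̃_t(x,x₀) = (√α_t (1-ᾱ_{t-1}) x + √ᾱ_{t-1} β_t x₀)/(1-ᾱ_t)` and variance
`β̃_t = (1-ᾱ_{t-1}) β_t/(1-ᾱ_t)`. -/
theorem ddpm_posterior_gaussian
    {Ω : Type*} [MeasurableSpace Ω] (P : Measure Ω) [IsProbabilityMeasure P]
    (t : ℕ) (ht : 1 ≤ t)
    (abarPrev alpha : ℝ)
    (habarPrev : abarPrev ∈ Set.Ioo (0 : ℝ) 1) (halpha : alpha ∈ Set.Ioo (0 : ℝ) 1)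
    (betat : ℝ) (hbetat : betat = 1 - alpha)
    (abar : ℝ) (habar : abar = alpha * abarPrev)
    (x₀ : ℝ)
    (ε Z : Ω → ℝ) (hεmeas : Measurable ε) (hZmeas : Measurable Z)
    (hindep : IndepFun ε Z P)
    (hεlaw : P.map ε = gaussianReal 0 1) (hZlaw : P.map Z = gaussianReal 0 1)
    (Xprev Xt : Ω → ℝ)
    (hXprev : Xprev = fun ω => Real.sqrt abarPrev * x₀ + Real.sqrt (1 - abarPrev) * ε ω)
    (hXt : Xt = fun ω => Real.sqrt alpha * Xprev ω + Real.sqrt betat * Z ω) :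
    (∀ a b : ℝ, ∃ (m : ℝ) (v : NNReal),
      P.map (fun ω => a * Xprev ω + b * Xt ω) = gaussianReal m v) ∧
    (∀ᵐ x ∂(P.map Xt),
      condDistrib Xprev Xt P x =
        gaussianReal
          ((Real.sqrt alpha * (1 - abarPrev) * x + Real.sqrt abarPrev * betat * x₀)
            / (1 - abar))
          (Real.toNNReal ((1 - abarPrev) * betat / (1 - abar)))) :=
  ddpm_posterior_gaussian_general P abarPrev alpha habarPrev halpha betat hbetat abar habar x₀ ε Z
    hεmeas hZmeas hindep hεlaw hZlaw Xprev Xt hXprev hXt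
end
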